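/- Let s be a schedule over T allowed under an {RC,SI,SSI}-allocation A, not conflict-serializable, with C a cycle in the serialization graph of s and T' the transactions occurring on C. Then there exists a schedule s' over T' allowed under A[T'] that is not conflict-serializable; s' is obtained from s by deleting all operations of transactions outside T' and redirecting each read whose version was written by a deleted transaction to the <<-latest write in T' preceding its original version. -/

import Mathlib

namespace MVCC

/-! Common formalization of multiversion schedules, dependencies,
conflict/view serializability, isolation levels and robustness. -/

inductive Action : Type
  | init | read | write | commit
deriving DecidableEq

/-- The ambient "environment": each operation belongs to a transaction,
has an action kind and an object; there is a special initial operation `op0`,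
and each transaction has a designated commit operation and first operation. -/
structure Env (Obj Tr Opn : Type) where
  tr : Opn → Tr
  act : Opn → Action
  obj : Opn → Obj
  op0 : Opn
  op0_act : act op0 = Action.init
  commitOf : Tr → Opn
  commit_tr : ∀ t, tr (commitOf t) = t
  commit_act : ∀ t, act (commitOf t) = Action.commit
  firstOf : Tr → Opn
  first_tr : ∀ t, tr (firstOf t) = t

variable {Obj Tr Opn : Type}

/-- Operations present in a schedule over the set of transactions `T'`. -/
def Env.opsOver (E : Env Obj Tr Opn) (T' : Set Tr) : Set Opn :=
  {a | a = E.op0 ∨ E.tr a ∈ T'}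

def Env.isRead (E : Env Obj Tr Opn) (a : Opn) : Prop := E.act a = Action.read
def Env.isWrite (E : Env Obj Tr Opn) (a : Opn) : Prop := E.act a = Action.write

/-- A transaction is read-only if it contains no write operations. -/
def Env.readOnly (E : Env Obj Tr Opn) (t : Tr) : Prop := ∀ a, E.tr a = t → ¬ E.isWrite a

/-- A multiversion schedule over the transactions `T'`:
an operation order `lt` (`<_s`), a version order `vlt` (`<<_s`)
and a version function `vf` (`v_s`). -/
structure Schedule (E : Env Obj Tr Opn) (T' : Set Tr) where
  lt : Opn → Opn → Prop
  vlt : Opn → Opn → Prop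
  vf : Opn → Opn
  lt_trans : ∀ a b c, lt a b → lt b c → lt a c
  lt_irrefl : ∀ a, ¬ lt a a
  lt_total : ∀ a ∈ E.opsOver T', ∀ b ∈ E.opsOver T', a ≠ b → lt a b ∨ lt b a
  op0_first : ∀ a ∈ E.opsOver T', a ≠ E.op0 → lt E.op0 a
  first_first : ∀ a ∈ E.opsOver T', a ≠ E.op0 → a ≠ E.firstOf (E.tr a) →
    lt (E.firstOf (E.tr a)) a
  commit_last : ∀ a ∈ E.opsOver T', a ≠ E.op0 → a ≠ E.commitOf (E.tr a) →
    lt a (E.commitOf (E.tr a))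
  vlt_trans : ∀ a b c, vlt a b → vlt b c → vlt a c
  vlt_irrefl : ∀ a, ¬ vlt a a
  vlt_total : ∀ a ∈ E.opsOver T', ∀ b ∈ E.opsOver T', E.isWrite a → E.isWrite b →
    E.obj a = E.obj b → a ≠ b → vlt a b ∨ vlt b a
  vlt_op0_first : ∀ a ∈ E.opsOver T', E.isWrite a → a ≠ E.op0 → vlt E.op0 a
  vf_read : ∀ a ∈ E.opsOver T', E.isRead a →
    vf a = E.op0 ∨ (vf a ∈ E.opsOver T' ∧ E.isWrite (vf a) ∧ E.obj (vf a) = E.obj a)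
  vf_lt : ∀ a ∈ E.opsOver T', E.isRead a → lt (vf a) a

namespace Schedule

variable {E : Env Obj Tr Opn} {T' : Set Tr}

/-- ww-dependency: both writes on the same object, `b <<_s a`. -/
def wwDep (s : Schedule E T') (b a : Opn) : Prop :=
  b ∈ E.opsOver T' ∧ a ∈ E.opsOver T' ∧ E.tr b ≠ E.tr a ∧ E.obj b = E.obj a ∧
    E.isWrite b ∧ E.isWrite a ∧ s.vlt b a

/-- wr-dependency: `b` write, `a` read, `b = v_s(a)` or `b <<_s v_s(a)`. -/
def wrDep (s : Schedule E T') (b a : Opn) : Prop :=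
  b ∈ E.opsOver T' ∧ a ∈ E.opsOver T' ∧ E.tr b ≠ E.tr a ∧ E.obj b = E.obj a ∧
    E.isWrite b ∧ E.isRead a ∧ (b = s.vf a ∨ s.vlt b (s.vf a))

/-- rw-antidependency: `b` read, `a` write, `v_s(b) <<_s a`. -/
def rwDep (s : Schedule E T') (b a : Opn) : Prop :=
  b ∈ E.opsOver T' ∧ a ∈ E.opsOver T' ∧ E.tr b ≠ E.tr a ∧ E.obj b = E.obj a ∧
    E.isRead b ∧ E.isWrite a ∧ s.vlt (s.vf b) a

/-- `a` depends on `b` in `s`. -/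
def dep (s : Schedule E T') (b a : Opn) : Prop :=
  s.wwDep b a ∨ s.wrDep b a ∨ s.rwDep b a

/-- Conflict-equivalence: identical dependencies. -/
def confEquiv (s s' : Schedule E T') : Prop := ∀ b a, s.dep b a ↔ s'.dep b a

/-- `a` installs the last (`<<_s`-maximal) version of its object in `s`. -/
def lastWrite (s : Schedule E T') (a : Opn) : Prop :=
  a ∈ E.opsOver T' ∧ E.isWrite a ∧
    ¬ ∃ c ∈ E.opsOver T', E.isWrite c ∧ E.obj c = E.obj a ∧ s.vlt a c

/-- View-equivalence: same version function on reads and the same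
last installed version per object. -/
def viewEquiv (s s' : Schedule E T') : Prop :=
  (∀ a ∈ E.opsOver T', E.isRead a → s.vf a = s'.vf a) ∧
  (∀ a, s.lastWrite a ↔ s'.lastWrite a)

/-- Single-version schedule: the version order agrees with the operation order
on writes to the same object and every read reads the most recent write. -/
def singleVersion (s : Schedule E T') : Prop :=
  (∀ a ∈ E.opsOver T', ∀ b ∈ E.opsOver T', E.isWrite a → E.isWrite b →
    E.obj a = E.obj b → (s.vlt a b ↔ s.lt a b)) ∧
  (∀ a ∈ E.opsOver T', E.isRead a →
    ¬ ∃ c ∈ E.opsOver T', E.isWrite c ∧ E.obj c = E.obj a ∧ s.lt (s.vf a) c ∧ s.lt c a)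

/-- Serial schedule: transactions are not interleaved. -/
def serial (s : Schedule E T') : Prop :=
  ∀ a b c, a ∈ E.opsOver T' → b ∈ E.opsOver T' → c ∈ E.opsOver T' →
    a ≠ E.op0 → b ≠ E.op0 → c ≠ E.op0 →
    s.lt a b → s.lt b c → E.tr a = E.tr c → E.tr b = E.tr a

def conflictSerializable (s : Schedule E T') : Prop :=
  ∃ s' : Schedule E T', s'.singleVersion ∧ s'.serial ∧ s.confEquiv s'

def viewSerializable (s : Schedule E T') : Prop :=
  ∃ s' : Schedule E T', s'.singleVersion ∧ s'.serial ∧ s.viewEquiv s'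

/-- Edge of the serialization graph. -/
def sgEdge (s : Schedule E T') (ti tj : Tr) : Prop :=
  ∃ b a, s.dep b a ∧ E.tr b = ti ∧ E.tr a = tj

/-- Acyclicity of the serialization graph. -/
def sgAcyclic (s : Schedule E T') : Prop :=
  ∀ t : Tr, ¬ Relation.TransGen s.sgEdge t t

/-- Transaction `ti` occurs (entirely) before transaction `tj` in `s`. -/
def transBefore (s : Schedule E T') (ti tj : Tr) : Prop :=
  ∀ p ∈ E.opsOver T', ∀ q ∈ E.opsOver T', p ≠ E.op0 → q ≠ E.op0 →
    E.tr p = ti → E.tr q = tj → s.lt p q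

/-- Write operation `a` respects the commit order of `s`. -/
def respectsCommitOrder (s : Schedule E T') (a : Opn) : Prop :=
  ∀ b ∈ E.opsOver T', E.isWrite b → E.obj b = E.obj a → E.tr b ≠ E.tr a →
    (s.vlt a b ↔ s.lt (E.commitOf (E.tr a)) (E.commitOf (E.tr b)))

/-- Read operation `b` is read-last-committed in `s` relative to operation `rel`. -/
def readLastCommitted (s : Schedule E T') (b rel : Opn) : Prop :=
  (s.vf b = E.op0 ∨ s.lt (E.commitOf (E.tr (s.vf b))) rel) ∧
  ¬ ∃ c ∈ E.opsOver T', E.isWrite c ∧ E.obj c = E.obj b ∧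
      s.lt (E.commitOf (E.tr c)) rel ∧ s.vlt (s.vf b) c

/-- Transaction `t` exhibits a dirty write in `s`. -/
def dirtyWrite (s : Schedule E T') (t : Tr) : Prop :=
  ∃ b ∈ E.opsOver T', ∃ a ∈ E.opsOver T', E.isWrite b ∧ E.isWrite a ∧
    E.obj b = E.obj a ∧ E.tr a = t ∧ E.tr b ≠ t ∧
    s.lt b a ∧ s.lt a (E.commitOf (E.tr b))

/-- Transaction `t` exhibits a concurrent write in `s`. -/
def concurrentWrite (s : Schedule E T') (t : Tr) : Prop :=
  ∃ b ∈ E.opsOver T', ∃ a ∈ E.opsOver T', E.isWrite b ∧ E.isWrite a ∧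
    E.obj b = E.obj a ∧ E.tr a = t ∧ E.tr b ≠ t ∧
    s.lt b a ∧ s.lt (E.firstOf t) (E.commitOf (E.tr b))

/-- Two transactions are concurrent: each starts before the other commits. -/
def concurrent (s : Schedule E T') (ti tj : Tr) : Prop :=
  s.lt (E.firstOf ti) (E.commitOf tj) ∧ s.lt (E.firstOf tj) (E.commitOf ti)

/-- Transaction `t` is allowed under Read Committed in `s`. -/
def allowedRC (s : Schedule E T') (t : Tr) : Prop :=
  (∀ a ∈ E.opsOver T', E.tr a = t → a ≠ E.op0 → E.isWrite a → s.respectsCommitOrder a) ∧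
  (∀ a ∈ E.opsOver T', E.tr a = t → E.isRead a → s.readLastCommitted a a) ∧
  ¬ s.dirtyWrite t

/-- Transaction `t` is allowed under Snapshot Isolation in `s`. -/
def allowedSI (s : Schedule E T') (t : Tr) : Prop :=
  (∀ a ∈ E.opsOver T', E.tr a = t → a ≠ E.op0 → E.isWrite a → s.respectsCommitOrder a) ∧
  (∀ a ∈ E.opsOver T', E.tr a = t → E.isRead a → s.readLastCommitted a (E.firstOf t)) ∧
  ¬ s.concurrentWrite t

/-- There is a rw-antidependency from (an operation of) `ti` to `tj`. -/
def rwEdge (s : Schedule E T') (ti tj : Tr) : Prop :=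
  ∃ b a, s.rwDep b a ∧ E.tr b = ti ∧ E.tr a = tj

/-- Dangerous structure `t1 → t2 → t3`. -/
def dangerous (s : Schedule E T') (t1 t2 t3 : Tr) : Prop :=
  s.rwEdge t1 t2 ∧ s.rwEdge t2 t3 ∧ s.concurrent t1 t2 ∧ s.concurrent t2 t3 ∧
  s.lt (E.commitOf t3) (E.commitOf t1) ∧ s.lt (E.commitOf t3) (E.commitOf t2) ∧
  (E.readOnly t1 → s.lt (E.commitOf t3) (E.firstOf t1))

end Schedule

inductive IsoLevel : Type
  | RC | SI | SSI
deriving DecidableEq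

/-- A schedule is allowed under the `{RC,SI,SSI}`-allocation `f`. -/
def allowedUnder {E : Env Obj Tr Opn} {T' : Set Tr} (f : Tr → IsoLevel)
    (s : Schedule E T') : Prop :=
  (∀ t ∈ T', f t = IsoLevel.RC → s.allowedRC t) ∧
  (∀ t ∈ T', f t ≠ IsoLevel.RC → s.allowedSI t) ∧
  ¬ ∃ t1 ∈ T', ∃ t2 ∈ T', ∃ t3 ∈ T', f t1 = IsoLevel.SSI ∧ f t2 = IsoLevel.SSI ∧
      f t3 = IsoLevel.SSI ∧ s.dangerous t1 t2 t3

/-- An (abstract) allocation: for each subset of transactions,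
a set of allowed schedules over that subset. -/
def Allocation (E : Env Obj Tr Opn) : Type _ :=
  (T' : Set Tr) → Schedule E T' → Prop

/-- Conflict-robustness: every allowed schedule over every subset of `T`
is conflict-serializable. -/
def conflictRobust (E : Env Obj Tr Opn) (T : Set Tr) (A : Allocation E) : Prop :=
  ∀ T' : Set Tr, T' ⊆ T → ∀ s : Schedule E T', A T' s → s.conflictSerializable

/-- View-robustness: every allowed schedule over every subset of `T`
is view-serializable. -/
def viewRobust (E : Env Obj Tr Opn) (T : Set Tr) (A : Allocation E) : Prop :=
  ∀ T' : Set Tr, T' ⊆ T → ∀ s : Schedule E T', A T' s → s.viewSerializable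

/-- `s` is a generalized split schedule over the transactions `σ 0, …, σ (n-1)`
(cyclically ordered) with split operation `b1` of transaction `σ 0`. -/
def isGenSplitWith {E : Env Obj Tr Opn} {T' : Set Tr} (s : Schedule E T')
    (n : ℕ) (σ : ZMod n → Tr) (b1 : Opn) : Prop :=
  2 ≤ n ∧ Function.Injective σ ∧ Set.range σ = T' ∧
  b1 ∈ E.opsOver T' ∧ b1 ≠ E.op0 ∧ E.tr b1 = σ 0 ∧
  -- shape: prefix(T1, b1) comes before all operations of T2 … Tn
  (∀ a ∈ E.opsOver T', a ≠ E.op0 → E.tr a = σ 0 → (a = b1 ∨ s.lt a b1) →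
    ∀ c ∈ E.opsOver T', c ≠ E.op0 → E.tr c ≠ σ 0 → s.lt a c) ∧
  -- shape: postfix(T1, b1) comes after all operations of T2 … Tn
  (∀ a ∈ E.opsOver T', a ≠ E.op0 → E.tr a = σ 0 → s.lt b1 a →
    ∀ c ∈ E.opsOver T', c ≠ E.op0 → E.tr c ≠ σ 0 → s.lt c a) ∧
  -- shape: T2 … Tn occur serially, in order
  (∀ i j : ZMod n, i ≠ 0 → j ≠ 0 → i.val < j.val →
    ∀ a ∈ E.opsOver T', ∀ c ∈ E.opsOver T', a ≠ E.op0 → c ≠ E.op0 →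
      E.tr a = σ i → E.tr c = σ j → s.lt a c) ∧
  -- (1) there is a cyclic chain of dependencies
  (∀ i : ZMod n, ∃ b a, s.dep b a ∧ E.tr b = σ i ∧ E.tr a = σ (i + 1)) ∧
  -- (2) the cycle is minimal: all dependencies are between consecutive pairs
  (∀ b a, s.dep b a → ∃ i : ZMod n, E.tr b = σ i ∧ E.tr a = σ (i + 1)) ∧
  -- (3) write operations respect the commit order
  (∀ a ∈ E.opsOver T', a ≠ E.op0 → E.isWrite a → s.respectsCommitOrder a)

/-- `s` is a generalized split schedule. -/
def isGenSplit {E : Env Obj Tr Opn} {T' : Set Tr} (s : Schedule E T') : Prop :=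
  ∃ (n : ℕ) (σ : ZMod n → Tr) (b1 : Opn), isGenSplitWith s n σ b1

/-!
Keep the operation order of `s` and drop every transaction outside `T'`. Versions are ordered
by the commit order of their writers, so writes respect the commit order, and each read is
redirected to the newest write of `T'` committed before its snapshot point (the read itself
under RC, the first operation of its transaction under SI and SSI), so reads stay
read-last-committed. Since `s` is allowed, a write of `T'` is visible to a read exactly when
it is not newer than the version the read sees in `s`. Hence every dependency of `s` between
transactions of `T'` survives, so the cycle `σ` persists and the restriction is not
conflict-serializable; and every rw-antidependency of the restriction is one of `s`, so no
dangerous structure appears.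
-/

open Function Relation

lemma _root_.Relation.transGen_of_zmod_cycle {α : Type*} {r : α → α → Prop} {n : ℕ} [NeZero n]
    {σ : ZMod n → α} (h : ∀ i, r (σ i) (σ (i + 1))) : TransGen r (σ 0) (σ 0) := by
  have hpath : ∀ k : ℕ, TransGen r (σ 0) (σ (k + 1 : ℕ)) := by
    intro k
    induction k with
    | zero => simpa using TransGen.single (h 0)
    | succ k ih =>
      convert ih.tail (h _) using 2
      push_cast
      ring
  simpa [Nat.sub_add_cancel NeZero.one_le] using hpath (n - 1)

namespace Env

variable (E : Env Obj Tr Opn)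

lemma ne_op0_of_isWrite {a : Opn} (h : E.isWrite a) : a ≠ E.op0 := by
  rintro rfl
  simp [Env.isWrite, E.op0_act] at h

lemma ne_op0_of_isRead {a : Opn} (h : E.isRead a) : a ≠ E.op0 := by
  rintro rfl
  simp [Env.isRead, E.op0_act] at h

lemma commitOf_ne_op0 (t : Tr) : E.commitOf t ≠ E.op0 := by
  intro h
  simpa [h, E.op0_act] using E.commit_act t

lemma ne_commitOf_of_isWrite {a : Opn} (h : E.isWrite a) (t : Tr) : a ≠ E.commitOf t := by
  rintro rfl
  simp [Env.isWrite, E.commit_act] at h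

lemma commitOf_injective : Injective E.commitOf := fun t u h => by
  rw [← E.commit_tr t, h, E.commit_tr]

lemma opsOver_mono {T T' : Set Tr} (h : T' ⊆ T) : E.opsOver T' ⊆ E.opsOver T :=
  fun _ ha => ha.imp_right (@h _)

lemma commitOf_mem_opsOver {T : Set Tr} {t : Tr} (ht : t ∈ T) : E.commitOf t ∈ E.opsOver T :=
  Or.inr (by rwa [E.commit_tr])

end Env

namespace Schedule

variable {E : Env Obj Tr Opn} {T : Set Tr}

lemma not_vlt_op0 (s : Schedule E T) {a : Opn} (ha : a ∈ E.opsOver T) (hw : E.isWrite a) :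
    ¬ s.vlt a E.op0 := fun h =>
  s.vlt_irrefl a (s.vlt_trans _ _ _ h (s.vlt_op0_first a ha hw (E.ne_op0_of_isWrite hw)))

section SerializationGraph

variable {s : Schedule E T} {b a : Opn}

lemma dep.ne_op0 (hd : s.dep b a) : b ≠ E.op0 ∧ a ≠ E.op0 := by
  rcases hd with ⟨-, -, -, -, hb, ha, -⟩ | ⟨-, -, -, -, hb, ha, -⟩ | ⟨-, -, -, -, hb, ha, -⟩
  · exact ⟨E.ne_op0_of_isWrite hb, E.ne_op0_of_isWrite ha⟩
  · exact ⟨E.ne_op0_of_isWrite hb, E.ne_op0_of_isRead ha⟩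
  · exact ⟨E.ne_op0_of_isRead hb, E.ne_op0_of_isWrite ha⟩

lemma dep.mem_opsOver (hd : s.dep b a) :
    b ∈ E.opsOver T ∧ a ∈ E.opsOver T ∧ E.tr b ≠ E.tr a := by
  rcases hd with ⟨hb, ha, htr, -⟩ | ⟨hb, ha, htr, -⟩ | ⟨hb, ha, htr, -⟩ <;> exact ⟨hb, ha, htr⟩

lemma sgEdge.left_mem {t u : Tr} (h : s.sgEdge t u) : t ∈ T := by
  obtain ⟨b, a, hd, rfl, -⟩ := h
  exact hd.mem_opsOver.1.resolve_left hd.ne_op0.1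

lemma singleVersion.lt_of_dep (hsv : s.singleVersion) (hd : s.dep b a) : s.lt b a := by
  rcases hd with ⟨hb, ha, -, hobj, hwb, hwa, hv⟩ | ⟨hb, ha, -, hobj, hwb, hra, hv⟩ |
    ⟨hb, ha, htr, hobj, hrb, hwa, hv⟩
  · exact (hsv.1 b hb a ha hwb hwa hobj).mp hv
  · have hva := s.vf_lt a ha hra
    rcases hv with rfl | hv
    · exact hva
    obtain h0 | ⟨hvO, hvw, hvobj⟩ := s.vf_read a ha hra
    · exact absurd (h0 ▸ hv) (s.not_vlt_op0 hb hwb)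
    · exact s.lt_trans _ _ _ ((hsv.1 b hb _ hvO hwb hvw (hobj.trans hvobj.symm)).mp hv) hva
  · -- a write between the version read by `b` and `b` itself would break single-versionedness
    have hvb : s.lt (s.vf b) a := by
      obtain h0 | ⟨hvO, hvw, hvobj⟩ := s.vf_read b hb hrb
      · exact h0 ▸ s.op0_first a ha (E.ne_op0_of_isWrite hwa)
      · exact (hsv.1 _ hvO a ha hvw hwa (hvobj.trans hobj)).mp hv
    refine (s.lt_total b hb a ha fun h => htr (h ▸ rfl)).resolve_right fun hab => ?_
    exact hsv.2 b hb hrb ⟨a, ha, hwa, hobj.symm, hvb, hab⟩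

lemma transBefore_of_sgEdge (hsv : s.singleVersion) (hser : s.serial) {t u : Tr}
    (h : s.sgEdge t u) : s.transBefore t u := by
  obtain ⟨b, a, hd, rfl, rfl⟩ := h
  obtain ⟨hb, ha, htr⟩ := hd.mem_opsOver
  obtain ⟨hb0, ha0⟩ := hd.ne_op0
  have hba := hsv.lt_of_dep hd
  intro p hp q hq hp0 hq0 hpt hqt
  by_contra hpq
  have hqp : s.lt q p :=
    (s.lt_total p hp q hq fun h => htr (by rw [← hpt, h, hqt])).resolve_left hpq
  rcases s.lt_total b hb q hq (fun h => htr (by rw [h, hqt])) with hbq | hqb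
  · exact htr ((hser b q p hb hq hp hb0 hq0 hp0 hbq hqp hpt.symm).symm.trans hqt)
  · exact htr ((hser q b a hq hb ha hq0 hb0 ha0 hqb hba hqt).trans hqt)

lemma transBefore.trans {t u v : Tr} (h₁ : s.transBefore t u) (hu : u ∈ T)
    (h₂ : s.transBefore u v) : s.transBefore t v :=
  fun p hp q hq hp0 hq0 hpt hqt =>
    s.lt_trans _ _ _
      (h₁ p hp _ (E.commitOf_mem_opsOver hu) hp0 (E.commitOf_ne_op0 u) hpt (E.commit_tr u))
      (h₂ _ (E.commitOf_mem_opsOver hu) q hq (E.commitOf_ne_op0 u) hq0 (E.commit_tr u) hqt)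

lemma singleVersion.sgAcyclic (hsv : s.singleVersion) (hser : s.serial) : s.sgAcyclic := by
  have hbefore : ∀ {t u}, TransGen s.sgEdge t u → s.transBefore t u := by
    intro t u h
    induction h with
    | single h => exact transBefore_of_sgEdge hsv hser h
    | tail _ h ih => exact ih.trans h.left_mem (transBefore_of_sgEdge hsv hser h)
  intro t hcyc
  obtain ⟨_, hfirst, -⟩ := TransGen.head'_iff.mp hcyc
  have ht := hfirst.left_mem
  exact s.lt_irrefl _ (hbefore hcyc _ (E.commitOf_mem_opsOver ht) _ (E.commitOf_mem_opsOver ht)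
    (E.commitOf_ne_op0 t) (E.commitOf_ne_op0 t) (E.commit_tr t) (E.commit_tr t))

lemma conflictSerializable.sgAcyclic (h : s.conflictSerializable) : s.sgAcyclic := by
  obtain ⟨s', hsv, hser, heq⟩ := h
  have hedge : s.sgEdge = s'.sgEdge :=
    funext₂ fun _ _ => propext <| exists₂_congr fun b a => and_congr_left' (heq b a)
  intro t
  rw [hedge]
  exact hsv.sgAcyclic hser t

end SerializationGraph

section Monotonicity

variable {T' : Set Tr} {s₁ : Schedule E T'} {s₂ : Schedule E T}

lemma dirtyWrite.mono (hsub : T' ⊆ T) (hlt : s₁.lt = s₂.lt) {t : Tr} (h : s₁.dirtyWrite t) :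
    s₂.dirtyWrite t := by
  obtain ⟨b, hb, a, ha, h⟩ := h
  exact ⟨b, E.opsOver_mono hsub hb, a, E.opsOver_mono hsub ha, hlt ▸ h⟩

lemma concurrentWrite.mono (hsub : T' ⊆ T) (hlt : s₁.lt = s₂.lt) {t : Tr}
    (h : s₁.concurrentWrite t) : s₂.concurrentWrite t := by
  obtain ⟨b, hb, a, ha, h⟩ := h
  exact ⟨b, E.opsOver_mono hsub hb, a, E.opsOver_mono hsub ha, hlt ▸ h⟩

lemma dangerous.mono (hlt : s₁.lt = s₂.lt) (hrw : ∀ b a, s₁.rwDep b a → s₂.rwDep b a)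
    {t₁ t₂ t₃ : Tr} (h : s₁.dangerous t₁ t₂ t₃) : s₂.dangerous t₁ t₂ t₃ := by
  obtain ⟨⟨b, a, h₁, hb, ha⟩, ⟨b', a', h₂, hb', ha'⟩, hrest⟩ := h
  refine ⟨⟨b, a, hrw b a h₁, hb, ha⟩, ⟨b', a', hrw b' a' h₂, hb', ha'⟩, ?_⟩
  simpa only [concurrent, hlt] using hrest

end Monotonicity

section Restriction

variable (f : Tr → IsoLevel)

def snapshotOp (E : Env Obj Tr Opn) (b : Opn) : Opn :=
  if f (E.tr b) = IsoLevel.RC then b else E.firstOf (E.tr b)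

variable {f} (s : Schedule E T)

lemma lt_of_lt_snapshotOp {b x : Opn} (hb : b ∈ E.opsOver T) (hb0 : b ≠ E.op0)
    (h : s.lt x (snapshotOp f E b)) : s.lt x b := by
  unfold snapshotOp at h
  split_ifs at h
  · exact h
  · by_cases hfirst : b = E.firstOf (E.tr b)
    · rwa [← hfirst] at h
    · exact s.lt_trans _ _ _ h (s.first_first b hb hb0 hfirst)

variable {s}

lemma _root_.MVCC.allowedUnder.respectsCommitOrder (hallow : allowedUnder f s) {a : Opn}
    (ha : a ∈ E.opsOver T) (hw : E.isWrite a) : s.respectsCommitOrder a := by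
  have ha0 := E.ne_op0_of_isWrite hw
  by_cases hf : f (E.tr a) = IsoLevel.RC
  · exact (hallow.1 _ (ha.resolve_left ha0) hf).1 a ha rfl ha0 hw
  · exact (hallow.2.1 _ (ha.resolve_left ha0) hf).1 a ha rfl ha0 hw

lemma _root_.MVCC.allowedUnder.readLastCommitted (hallow : allowedUnder f s) {b : Opn}
    (hb : b ∈ E.opsOver T) (hr : E.isRead b) : s.readLastCommitted b (snapshotOp f E b) := by
  have hbT := hb.resolve_left (E.ne_op0_of_isRead hr)
  unfold snapshotOp
  split_ifs with hf
  · exact (hallow.1 _ hbT hf).2.1 b hb rfl hr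
  · exact (hallow.2.1 _ hbT hf).2.1 b hb rfl hr

variable (s)

def commitsAfter (u t : Tr) : Prop := s.lt (E.commitOf t) (E.commitOf u)

instance : IsStrictOrder Tr s.commitsAfter where
  irrefl _ := s.lt_irrefl _
  trans _ _ _ h₁ h₂ := s.lt_trans _ _ _ h₂ h₁

def newerVersion : Opn → Opn → Prop :=
  Prod.Lex s.commitsAfter WellOrderingRel on fun x => (E.tr x, x)

/-- Keeping `s.vlt` would not do: a transaction may write an object infinitely often with no
`<<`-greatest write, while every read of the restriction needs a greatest visible version. Hence
the writes of one transaction are ordered by a reversed well-order. -/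
def commitVlt (x y : Opn) : Prop :=
  (x = E.op0 ∧ y ≠ E.op0) ∨ (x ≠ E.op0 ∧ y ≠ E.op0 ∧ s.newerVersion y x)

variable {s}

lemma newerVersion_total {x y : Opn} (hx : E.tr x ∈ T) (hy : E.tr y ∈ T) (hxy : x ≠ y) :
    s.newerVersion x y ∨ s.newerVersion y x := by
  simp only [newerVersion, onFun, Prod.lex_def]
  by_cases ht : E.tr x = E.tr y
  · rcases trichotomous_of WellOrderingRel x y with h | h | h
    · exact Or.inl (Or.inr ⟨ht, h⟩)
    · exact absurd h hxy
    · exact Or.inr (Or.inr ⟨ht.symm, h⟩)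
  · rcases s.lt_total _ (E.commitOf_mem_opsOver hy) _ (E.commitOf_mem_opsOver hx)
      fun h => ht (E.commitOf_injective h).symm with h | h
    · exact Or.inl (Or.inl h)
    · exact Or.inr (Or.inl h)

lemma commitVlt_irrefl (x : Opn) : ¬ s.commitVlt x x := by
  rintro (⟨h, h'⟩ | ⟨-, -, h⟩)
  · exact h' h
  · exact irrefl_of (Prod.Lex _ _) _ h

lemma commitVlt_trans {x y z : Opn} : s.commitVlt x y → s.commitVlt y z → s.commitVlt x z := by
  rintro (⟨hx, hy⟩ | ⟨hx, hy, hyx⟩) (⟨hy', hz⟩ | ⟨-, hz, hzy⟩)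
  · exact absurd hy' hy
  · exact Or.inl ⟨hx, hz⟩
  · exact absurd hy' hy
  · exact Or.inr ⟨hx, hz, Prod.Lex.trans hzy hyx⟩

lemma commitVlt_total {x y : Opn} (hx : E.tr x ∈ T) (hy : E.tr y ∈ T) (hx0 : x ≠ E.op0)
    (hy0 : y ≠ E.op0) (hxy : x ≠ y) : s.commitVlt x y ∨ s.commitVlt y x :=
  (newerVersion_total hy hx (Ne.symm hxy)).imp (fun h => Or.inr ⟨hx0, hy0, h⟩)
    fun h => Or.inr ⟨hy0, hx0, h⟩

lemma commitVlt_iff_of_tr_ne {x y : Opn} (hx0 : x ≠ E.op0) (hy0 : y ≠ E.op0)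
    (ht : E.tr x ≠ E.tr y) :
    s.commitVlt x y ↔ s.lt (E.commitOf (E.tr x)) (E.commitOf (E.tr y)) := by
  simp [commitVlt, newerVersion, onFun, Prod.lex_def, commitsAfter, hx0, hy0, Ne.symm ht]

lemma commitVlt_of_vlt (hallow : allowedUnder f s) {x y : Opn} (hx : x ∈ E.opsOver T)
    (hy : y ∈ E.opsOver T) (hwx : E.isWrite x) (hwy : E.isWrite y) (hobj : E.obj x = E.obj y)
    (ht : E.tr x ≠ E.tr y) (h : s.vlt x y) : s.commitVlt x y :=
  (commitVlt_iff_of_tr_ne (E.ne_op0_of_isWrite hwx) (E.ne_op0_of_isWrite hwy) ht).mpr <|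
    (hallow.respectsCommitOrder hx hwx y hy hwy hobj.symm (Ne.symm ht)).mp h

lemma wellFoundedOn_newerVersion {S : Set Opn} (hS : (E.tr '' S).Finite) :
    S.WellFoundedOn s.newerVersion :=
  Set.WellFoundedOn.prod_lex_of_wellFoundedOn_fiber (g := id)
    (hS.wellFoundedOn.mapsTo E.tr (Set.mapsTo_image _ _))
    fun _ => (IsWellFounded.wf.onFun : WellFounded (WellOrderingRel on id)).wellFoundedOn

variable (f s) (T' : Set Tr)

def visibleWrites (b : Opn) : Set Opn :=
  {c | c ∈ E.opsOver T' ∧ E.isWrite c ∧ E.obj c = E.obj b ∧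
    s.lt (E.commitOf (E.tr c)) (snapshotOp f E b)}

def IsNewestVisible (b m : Opn) : Prop :=
  m ∈ s.visibleWrites f T' b ∧ ∀ c ∈ s.visibleWrites f T' b, c = m ∨ s.commitVlt c m

open Classical in
noncomputable def restrictVf (b : Opn) : Opn :=
  if h : ∃ m, s.IsNewestVisible f T' b m then h.choose else E.op0

variable {f s T'}

lemma restrictVf_eq_op0_or_mem (b : Opn) :
    s.restrictVf f T' b = E.op0 ∨ s.restrictVf f T' b ∈ s.visibleWrites f T' b := by
  unfold restrictVf
  split_ifs with h
  exacts [Or.inr h.choose_spec.1, Or.inl rfl]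

lemma exists_isNewestVisible (hsub : T' ⊆ T) (hfin : T'.Finite) {b : Opn}
    (hne : (s.visibleWrites f T' b).Nonempty) : ∃ m, s.IsNewestVisible f T' b m := by
  have htr : ∀ c ∈ s.visibleWrites f T' b, E.tr c ∈ T' := fun c hc =>
    hc.1.resolve_left (E.ne_op0_of_isWrite hc.2.1)
  have hwf := wellFoundedOn_newerVersion (s := s)
    (hfin.subset (Set.image_subset_iff.mpr htr))
  obtain ⟨m, hm, hnewest⟩ := (Set.wellFoundedOn_iff.mp hwf).has_min _ hne
  refine ⟨m, hm, fun c hc => or_iff_not_imp_left.mpr fun hcm => ?_⟩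
  rcases newerVersion_total (s := s) (hsub (htr c hc)) (hsub (htr m hm)) hcm with h | h
  · exact absurd ⟨h, hc, hm⟩ (hnewest c hc)
  · exact Or.inr ⟨E.ne_op0_of_isWrite hc.2.1, E.ne_op0_of_isWrite hm.2.1, h⟩

lemma isNewestVisible_restrictVf (hsub : T' ⊆ T) (hfin : T'.Finite) {b c : Opn}
    (hc : c ∈ s.visibleWrites f T' b) : s.IsNewestVisible f T' b (s.restrictVf f T' b) := by
  have h := exists_isNewestVisible hsub hfin ⟨c, hc⟩
  rw [restrictVf, dif_pos h]
  exact h.choose_spec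

lemma not_commitVlt_restrictVf (hsub : T' ⊆ T) (hfin : T'.Finite) {b c : Opn}
    (hc : c ∈ s.visibleWrites f T' b) : ¬ s.commitVlt (s.restrictVf f T' b) c := fun h =>
  ((isNewestVisible_restrictVf hsub hfin hc).2 c hc).elim
    (fun he => commitVlt_irrefl _ (he ▸ h)) fun h' => commitVlt_irrefl c (commitVlt_trans h' h)

lemma restrictVf_lt (hsub : T' ⊆ T) {b : Opn} (hb : b ∈ E.opsOver T') (hr : E.isRead b) :
    s.lt (s.restrictVf f T' b) b := by
  have hbT := E.opsOver_mono hsub hb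
  have hb0 := E.ne_op0_of_isRead hr
  rcases restrictVf_eq_op0_or_mem (s := s) (f := f) (T' := T') b with h0 | ⟨hm, hw, -, hcommit⟩
  · exact h0 ▸ s.op0_first b hbT hb0
  · refine s.lt_of_lt_snapshotOp hbT hb0 (s.lt_trans _ _ _ ?_ hcommit)
    exact s.commit_last _ (E.opsOver_mono hsub hm) (E.ne_op0_of_isWrite hw)
      (E.ne_commitOf_of_isWrite hw _)

lemma mem_visibleWrites_iff (hallow : allowedUnder f s) (hsub : T' ⊆ T) {b c : Opn}
    (hb : b ∈ E.opsOver T) (hr : E.isRead b) (hc : c ∈ E.opsOver T') (hw : E.isWrite c)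
    (hobj : E.obj c = E.obj b) :
    c ∈ s.visibleWrites f T' b ↔ c = s.vf b ∨ s.vlt c (s.vf b) := by
  have hcT := E.opsOver_mono hsub hc
  have hc0 := E.ne_op0_of_isWrite hw
  obtain ⟨hvf, hlast⟩ := hallow.readLastCommitted hb hr
  constructor
  · rintro ⟨-, -, -, hcommit⟩
    obtain h0 | ⟨hvO, hvw, hvobj⟩ := s.vf_read b hb hr
    · exact absurd ⟨c, hcT, hw, hobj, hcommit, h0 ▸ s.vlt_op0_first c hcT hw hc0⟩ hlast
    · refine or_iff_not_imp_left.mpr fun hne => ?_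
      refine (s.vlt_total c hcT _ hvO hw hvw (hobj.trans hvobj.symm) hne).resolve_right ?_
      exact fun h => hlast ⟨c, hcT, hw, hobj, hcommit, h⟩
  · intro hv
    refine ⟨hc, hw, hobj, ?_⟩
    have hvf0 : s.vf b ≠ E.op0 := fun h0 =>
      hv.elim (fun he => hc0 (he.trans h0)) fun h => s.not_vlt_op0 hcT hw (h0 ▸ h)
    have hvc := hvf.resolve_left hvf0
    rcases hv with rfl | hv
    · exact hvc
    obtain ⟨hvO, hvw, hvobj⟩ := (s.vf_read b hb hr).resolve_left hvf0
    by_cases ht : E.tr c = E.tr (s.vf b)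
    · rwa [ht]
    · refine s.lt_trans _ _ _ ?_ hvc
      exact (hallow.respectsCommitOrder hcT hw _ hvO hvw (hvobj.trans hobj.symm)
        (Ne.symm ht)).mp hv

variable (f s)

noncomputable def restrict (hsub : T' ⊆ T) : Schedule E T' where
  lt := s.lt
  vlt := s.commitVlt
  vf := s.restrictVf f T'
  lt_trans := s.lt_trans
  lt_irrefl := s.lt_irrefl
  lt_total a ha b hb := s.lt_total a (E.opsOver_mono hsub ha) b (E.opsOver_mono hsub hb)
  op0_first a ha := s.op0_first a (E.opsOver_mono hsub ha)
  first_first a ha := s.first_first a (E.opsOver_mono hsub ha)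
  commit_last a ha := s.commit_last a (E.opsOver_mono hsub ha)
  vlt_trans _ _ _ := commitVlt_trans
  vlt_irrefl := commitVlt_irrefl
  vlt_total _ ha _ hb hwa hwb _ hab :=
    commitVlt_total (hsub (ha.resolve_left (E.ne_op0_of_isWrite hwa)))
      (hsub (hb.resolve_left (E.ne_op0_of_isWrite hwb))) (E.ne_op0_of_isWrite hwa)
      (E.ne_op0_of_isWrite hwb) hab
  vlt_op0_first _ _ _ h0 := Or.inl ⟨rfl, h0⟩
  vf_read a _ _ := (restrictVf_eq_op0_or_mem a).imp_right fun h => ⟨h.1, h.2.1, h.2.2.1⟩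
  vf_lt _ hb hr := restrictVf_lt hsub hb hr

variable {f s} (hsub : T' ⊆ T)

lemma restrict_readLastCommitted (hfin : T'.Finite) {b : Opn} :
    (s.restrict f hsub).readLastCommitted b (snapshotOp f E b) :=
  ⟨(restrictVf_eq_op0_or_mem b).imp_right fun h => h.2.2.2,
    fun ⟨_, hc, hw, hobj, hcommit, hv⟩ =>
      not_commitVlt_restrictVf hsub hfin ⟨hc, hw, hobj, hcommit⟩ hv⟩

lemma restrict_respectsCommitOrder {a : Opn} (hw : E.isWrite a) :
    (s.restrict f hsub).respectsCommitOrder a := fun _ _ hwb _ ht =>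
  commitVlt_iff_of_tr_ne (E.ne_op0_of_isWrite hw) (E.ne_op0_of_isWrite hwb) (Ne.symm ht)

lemma rwDep_of_restrict (hallow : allowedUnder f s) (hfin : T'.Finite) {b a : Opn}
    (h : (s.restrict f hsub).rwDep b a) : s.rwDep b a := by
  obtain ⟨hb, ha, htr, hobj, hrb, hwa, hv⟩ := h
  have hbT := E.opsOver_mono hsub hb
  have haT := E.opsOver_mono hsub ha
  refine ⟨hbT, haT, htr, hobj, hrb, hwa, by_contra fun hva => ?_⟩
  have ha_vis : a ∈ s.visibleWrites f T' b := by
    refine (mem_visibleWrites_iff hallow hsub hbT hrb ha hwa hobj.symm).mpr ?_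
    obtain h0 | ⟨hvO, hvw, hvobj⟩ := s.vf_read b hbT hrb
    · exact absurd (h0 ▸ s.vlt_op0_first a haT hwa (E.ne_op0_of_isWrite hwa)) hva
    · refine or_iff_not_imp_left.mpr fun hne => ?_
      exact (s.vlt_total a haT _ hvO hwa hvw (hobj.symm.trans hvobj.symm) hne).resolve_right hva
  exact not_commitVlt_restrictVf hsub hfin ha_vis hv

lemma dep_restrict (hallow : allowedUnder f s) (hfin : T'.Finite) {b a : Opn}
    (hd : s.dep b a) (hb : E.tr b ∈ T') (ha : E.tr a ∈ T') : (s.restrict f hsub).dep b a := by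
  rcases hd with ⟨hbT, haT, htr, hobj, hwb, hwa, hv⟩ | ⟨hbT, haT, htr, hobj, hwb, hra, hv⟩ |
    ⟨hbT, haT, htr, hobj, hrb, hwa, hv⟩
  · exact Or.inl ⟨Or.inr hb, Or.inr ha, htr, hobj, hwb, hwa,
      commitVlt_of_vlt hallow hbT haT hwb hwa hobj htr hv⟩
  · have hb_vis := (mem_visibleWrites_iff hallow hsub haT hra (Or.inr hb) hwb hobj).mpr hv
    exact Or.inr (Or.inl ⟨Or.inr hb, Or.inr ha, htr, hobj, hwb, hra,
      (isNewestVisible_restrictVf hsub hfin hb_vis).2 b hb_vis⟩)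
  · refine Or.inr (Or.inr ⟨Or.inr hb, Or.inr ha, htr, hobj, hrb, hwa, ?_⟩)
    obtain h0 | hm := restrictVf_eq_op0_or_mem (s := s) (f := f) (T' := T') b
    · exact Or.inl ⟨h0, E.ne_op0_of_isWrite hwa⟩
    obtain ⟨hmO, hwm, hmobj, hcommit⟩ := hm
    have hmT := E.opsOver_mono hsub hmO
    have hma : s.vlt (s.restrictVf f T' b) a :=
      ((mem_visibleWrites_iff hallow hsub hbT hrb hmO hwm hmobj).mp
        ⟨hmO, hwm, hmobj, hcommit⟩).elim (fun he => he ▸ hv) fun h => s.vlt_trans _ _ _ h hv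
    -- `a` commits after the snapshot of `b`, otherwise `b` would not read last-committed in `s`
    have htr_ne : E.tr (s.restrictVf f T' b) ≠ E.tr a := fun he =>
      (hallow.readLastCommitted hbT hrb).2 ⟨a, haT, hwa, hobj.symm, he ▸ hcommit, hv⟩
    exact commitVlt_of_vlt hallow hmT haT hwm hwa (hmobj.trans hobj) htr_ne hma

lemma sgEdge_restrict (hallow : allowedUnder f s) (hfin : T'.Finite) {t u : Tr} (ht : t ∈ T')
    (hu : u ∈ T') (h : s.sgEdge t u) : (s.restrict f hsub).sgEdge t u := by
  obtain ⟨b, a, hd, rfl, rfl⟩ := h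
  exact ⟨b, a, dep_restrict hsub hallow hfin hd ht hu, rfl, rfl⟩

lemma allowedUnder_restrict (hallow : allowedUnder f s) (hfin : T'.Finite) :
    allowedUnder f (s.restrict f hsub) := by
  refine ⟨fun t ht hf => ⟨?_, ?_, ?_⟩, fun t ht hf => ⟨?_, ?_, ?_⟩, ?_⟩
  · exact fun _ _ _ _ hw => restrict_respectsCommitOrder hsub hw
  · rintro b - rfl -
    simpa [snapshotOp, hf] using restrict_readLastCommitted (f := f) (s := s) hsub hfin (b := b)
  · exact fun h => (hallow.1 t (hsub ht) hf).2.2 (h.mono hsub rfl)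
  · exact fun _ _ _ _ hw => restrict_respectsCommitOrder hsub hw
  · rintro b - rfl -
    simpa [snapshotOp, hf] using restrict_readLastCommitted (f := f) (s := s) hsub hfin (b := b)
  · exact fun h => (hallow.2.1 t (hsub ht) hf).2.2 (h.mono hsub rfl)
  · rintro ⟨t₁, h₁, t₂, h₂, t₃, h₃, hf₁, hf₂, hf₃, hd⟩
    exact hallow.2.2 ⟨t₁, hsub h₁, t₂, hsub h₂, t₃, hsub h₃, hf₁, hf₂, hf₃,
      dangerous.mono (s₁ := s.restrict f hsub) (s₂ := s) rfl
        (fun _ _ => rwDep_of_restrict hsub hallow hfin) hd⟩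

end Restriction

end Schedule

theorem stmt11_general {Obj Tr Opn : Type} {E : Env Obj Tr Opn} (f : Tr → IsoLevel)
    {T T' : Set Tr} (hsub : T' ⊆ T) (s : Schedule E T)
    (hallow : allowedUnder f s)
    (n : ℕ) (hn : 2 ≤ n) (σ : ZMod n → Tr)
    (hrange : Set.range σ = T')
    (hcycle : ∀ i : ZMod n, s.sgEdge (σ i) (σ (i + 1))) :
    ∃ s' : Schedule E T', allowedUnder f s' ∧ ¬ s'.conflictSerializable := by
  have : NeZero n := ⟨by omega⟩
  have hfin : T'.Finite := hrange ▸ Set.finite_range σ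
  have hσ : ∀ i, σ i ∈ T' := fun i => hrange ▸ Set.mem_range_self i
  refine ⟨s.restrict f hsub, Schedule.allowedUnder_restrict hsub hallow hfin, fun hcs => ?_⟩
  exact hcs.sgAcyclic (σ 0) <| Relation.transGen_of_zmod_cycle fun i =>
    Schedule.sgEdge_restrict hsub hallow hfin (hσ i) (hσ (i + 1)) (hcycle i)

/-- Restricting a non-conflict-serializable schedule allowed under an
`{RC,SI,SSI}`-allocation to the transactions of a cycle of its serialization graph
yields a non-conflict-serializable schedule over those transactions that is still
allowed under the restricted allocation. -/
theorem stmt11 {Obj Tr Opn : Type} {E : Env Obj Tr Opn} (f : Tr → IsoLevel)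
    {T T' : Set Tr} (hsub : T' ⊆ T) (s : Schedule E T)
    (hallow : allowedUnder f s) (hncs : ¬ s.conflictSerializable)
    (n : ℕ) (hn : 2 ≤ n) (σ : ZMod n → Tr) (hinj : Function.Injective σ)
    (hrange : Set.range σ = T')
    (hcycle : ∀ i : ZMod n, s.sgEdge (σ i) (σ (i + 1))) :
    ∃ s' : Schedule E T', allowedUnder f s' ∧ ¬ s'.conflictSerializable :=
  stmt11_general f hsub s hallow n hn σ hrange hcycle

end MVCC
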